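/- arXiv:2405.07107 — 3 statements merged into one kernel-verified Lean document; each statement's English description precedes it below -/
import Mathlib

section
/- Let U, X, Y be discrete random variables with finite support on a common probability space. If U ⊥⊥ Y | X, then S(X;U) =ι S((X,Y);U), i.e., the minimal sufficient statistic of X for U and the minimal sufficient statistic of the joint variable (X,Y) for U are informationally equivalent. -/
namespace Paper

/-- The probability of an event under a probability mass function. -/
noncomputable def pr {Ω : Type} (μ : PMF Ω) (E : Set Ω) : ENNReal :=
  μ.toOuterMeasure E

/-- Conditional independence `X ⊥⊥ Y | Z`:
`p(x,y,z) p(z) = p(x,z) p(y,z)` for all `x, y, z`. -/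
def CondIndep {Ω α β γ : Type} (μ : PMF Ω) (X : Ω → α) (Y : Ω → β) (Z : Ω → γ) : Prop :=
  ∀ (x : α) (y : β) (z : γ),
    pr μ {ω | X ω = x ∧ Y ω = y ∧ Z ω = z} * pr μ {ω | Z ω = z}
      = pr μ {ω | X ω = x ∧ Z ω = z} * pr μ {ω | Y ω = y ∧ Z ω = z}

/-- Unconditional independence `X ⊥⊥ Y`. -/
def Indep {Ω α β : Type} (μ : PMF Ω) (X : Ω → α) (Y : Ω → β) : Prop :=
  ∀ (x : α) (y : β),
    pr μ {ω | X ω = x ∧ Y ω = y} = pr μ {ω | X ω = x} * pr μ {ω | Y ω = y}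

/-- `X ≥ι Y`: `X` functionally determines `Y` (with probability one). -/
def FunDep {Ω α β : Type} (μ : PMF Ω) (X : Ω → α) (Y : Ω → β) : Prop :=
  ∃ f : α → β, ∀ ω ∈ μ.support, Y ω = f (X ω)

/-- `X =ι Y`: informational equivalence. -/
def InfoEq {Ω α β : Type} (μ : PMF Ω) (X : Ω → α) (Y : Ω → β) : Prop :=
  FunDep μ X Y ∧ FunDep μ Y X

/-- The random variable `X` has finite support. -/
def FinSupp {Ω α : Type} (μ : PMF Ω) (X : Ω → α) : Prop :=
  (X '' μ.support).Finite

/-- The random variable `X` has support of cardinality at most `ℓ`. -/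
def CardLE {Ω α : Type} (μ : PMF Ω) (X : Ω → α) (ℓ : ℕ) : Prop :=
  ∃ s : Finset α, s.card ≤ ℓ ∧ ∀ ω ∈ μ.support, X ω ∈ s

/-- `X` is uniformly distributed with support of cardinality `ℓ`. -/
def UniformCard {Ω α : Type} (μ : PMF Ω) (X : Ω → α) (ℓ : ℕ) : Prop :=
  ∃ S : Finset α, S.card = ℓ ∧ (∀ x ∈ S, pr μ {ω | X ω = x} = (ℓ : ENNReal)⁻¹) ∧
    ∀ x, x ∉ S → pr μ {ω | X ω = x} = 0

/-- The probability mass function of the random variable `X`. -/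
noncomputable def distOf {Ω α : Type} (μ : PMF Ω) (X : Ω → α) : α → ENNReal :=
  fun x => pr μ {ω | X ω = x}

/-- `p ⪰ q` : `p` majorizes `q`, i.e. for every `k`, the sum of the `k` largest values
of `p` is at least the sum of the `k` largest values of `q`. -/
def Majorizes (p q : ℕ → ENNReal) : Prop :=
  ∀ s : Finset ℕ, ∃ t : Finset ℕ, t.card ≤ s.card ∧ ∑ x ∈ s, q x ≤ ∑ x ∈ t, p x

/-- `T` is a sufficient statistic of `X` for `U`: `X ≥ι T` and `U ⊥⊥ X | T`. -/
def SuffStat {Ω α β γ : Type} (μ : PMF Ω) (X : Ω → α) (U : Ω → β) (T : Ω → γ) : Prop :=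
  FunDep μ X T ∧ CondIndep μ U X T

/-- `T` is a minimal sufficient statistic of `X` for `U`. -/
def MinSuffStat {Ω α β γ : Type} (μ : PMF Ω) (X : Ω → α) (U : Ω → β) (T : Ω → γ) : Prop :=
  SuffStat μ X U T ∧
    ∀ (δ : Type) (T' : Ω → δ), SuffStat μ X U T' → FunDep μ T' T

/-- Mutual independence of the subfamily `(V i)_{i ∈ s}`: each `V i` (for `i ∈ s`) is
independent of the joint variable of the others. -/
def MutIndepOn {Ω ι : Type} {β : ι → Type} (μ : PMF Ω) (V : ∀ i, Ω → β i)
    (s : Finset ι) : Prop :=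
  ∀ i ∈ s, Indep μ (V i) (fun ω => fun j : {j // j ∈ s ∧ j ≠ i} => V j.1 ω)

/-- Mutual independence of the whole family `(V i)_i`. -/
def MutIndep {Ω ι : Type} {β : ι → Type} (μ : PMF Ω) (V : ∀ i, Ω → β i) : Prop :=
  ∀ i, Indep μ (V i) (fun ω => fun j : {j // j ≠ i} => V j.1 ω)

/-- Mutual independence of `(V i)_{i ∈ C}` for a list `C` of indices. -/
def MutIndepL {Ω : Type} (μ : PMF Ω) (V : ℕ → Ω → ℕ) (C : List ℕ) : Prop :=
  ∀ i ∈ C, Indep μ (V i) (fun ω => fun j : {j // j ∈ C ∧ j ≠ i} => V j.1 ω)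

/-- The joint random variable `(X a)_{a ∈ A}` for a list `A` of indices. -/
def jointOn {Ω : Type} (X : ℕ → Ω → ℕ) (A : List ℕ) : Ω → ({a : ℕ // a ∈ A} → ℕ) :=
  fun ω a => X a.1 ω

/-- The joint random variable `(T i)_{i ∈ S}` for a finset `S` of indices. -/
def jointFin {Ω ι : Type} {β : ι → Type} (T : ∀ i, Ω → β i) (S : Finset ι) :
    Ω → ((i : {i // i ∈ S}) → β i.1) :=
  fun ω i => T i.1 ω

/-- The set of parents (in-neighbours) of `w` in the directed graph with edge relation `E`. -/
def parentSet {ν : Type} (E : ν → ν → Prop) (w : ν) : Set ν := {v | E v w}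

/-- The set of nodes that are neither descendants nor parents of `w`. -/
def nonDescSet {ν : Type} (E : ν → ν → Prop) (w : ν) : Set ν :=
  {v | ¬ Relation.ReflTransGen E w v ∧ ¬ E v w}

/-- The collection of random variables `(X v)_v` satisfies the Bayesian network structure
with edge relation `E`: each variable is conditionally independent of its
non-descendant non-parent variables given its parent variables. -/
def SatisfiesBN {Ω ν : Type} {β : ν → Type} (μ : PMF Ω) (X : ∀ v, Ω → β v)
    (E : ν → ν → Prop) : Prop :=
  ∀ w : ν, CondIndep μ (X w)
    (fun ω => fun v : nonDescSet E w => X v.1 ω)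
    (fun ω => fun v : parentSet E w => X v.1 ω)

/-- `E` is (the edge list of) a directed acyclic graph on the nodes `{0, …, n-1}`. -/
def IsDAG (n : ℕ) (E : List (ℕ × ℕ)) : Prop :=
  (∀ e ∈ E, e.1 < n ∧ e.2 < n) ∧
    ∀ i : ℕ, ¬ Relation.TransGen (fun a c => (a, c) ∈ E) i i

/-- The edge relation on `Fin n` determined by an edge list. -/
def edgeRelOn (n : ℕ) (E : List (ℕ × ℕ)) : Fin n → Fin n → Prop :=
  fun i j => ((i : ℕ), (j : ℕ)) ∈ E

/-- `(X_0, …, X_{n-1})` satisfies the Bayesian network given by the edge list `E`. -/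
def SatisfiesBNn {Ω : Type} (μ : PMF Ω) (n : ℕ) (X : ℕ → Ω → ℕ)
    (E : List (ℕ × ℕ)) : Prop :=
  SatisfiesBN μ (fun i : Fin n => X (i : ℕ)) (edgeRelOn n E)

/-- `(A, C, B) ∈ I(G_1, …, G_m)`: every collection of finitely supported discrete random
variables satisfying all the network structures in `Gs` satisfies `X_A ⊥⊥ X_B | X_C`. -/
def ImpliedCI (n : ℕ) (Gs : List (List (ℕ × ℕ))) (A C B : List ℕ) : Prop :=
  ∀ (Ω : Type) (μ : PMF Ω) (X : ℕ → Ω → ℕ),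
    (∀ i, i < n → FinSupp μ (X i)) →
    (∀ G ∈ Gs, SatisfiesBNn μ n X G) →
    CondIndep μ (jointOn X A) (jointOn X B) (jointOn X C)

/-- Two lists are disjoint as sets. -/
def DisjointL (A B : List ℕ) : Prop := ∀ a ∈ A, a ∉ B

end Paper

/-!
`T1 = S(X;U)` is a function of `(X, Y)`, and since also `U ⊥⊥ Y | X`, contraction gives
`U ⊥⊥ (X, Y) | T1`; so `T1` is sufficient for `(X, Y)` and `T1 ≥ι T2` by minimality of `T2`.
Conversely `T2 ≤ι T1 ≤ι X`, and `U ⊥⊥ (X, Y) | T2` decomposes to `U ⊥⊥ X | T2`; so `T2` is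
sufficient for `X` and `T2 ≥ι T1` by minimality of `T1`.
-/

lemma ENNReal.mul_eq_mul_of_common_factor {a b c d e f : ENNReal} (hac : a ≤ c) (hdc : d ≤ c)
    (hc : c ≠ ⊤) (h₁ : a * c = b * d) (h₂ : b * e = f * c) : a * e = f * d := by
  rcases eq_or_ne c 0 with rfl | hc₀
  · simp [nonpos_iff_eq_zero.mp hac, nonpos_iff_eq_zero.mp hdc]
  refine (ENNReal.mul_left_inj hc₀ hc).mp ?_
  calc a * e * c = a * c * e := by ring
    _ = b * e * d := by rw [h₁]; ring
    _ = f * d * c := by rw [h₂]; ring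

namespace Paper

section Probability

variable {Ω α β γ δ : Type} (μ : PMF Ω)

lemma pr_congr {E F : Set Ω} (h : ∀ ω ∈ μ.support, (ω ∈ E ↔ ω ∈ F)) :
    pr μ E = pr μ F := by
  classical
  simp only [pr, PMF.toOuterMeasure_apply]
  refine tsum_congr fun ω => ?_
  by_cases hω : ω ∈ μ.support
  · simp [Set.indicator_apply, h ω hω]
  · simp [Set.indicator_apply, (PMF.mem_support_iff μ ω).not_left.mp hω]

lemma pr_eq_zero {E : Set Ω} (h : ∀ ω ∈ μ.support, ω ∉ E) : pr μ E = 0 := by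
  rw [pr_congr μ (F := ∅) fun ω hω => by simp [h ω hω]]
  simp [pr]

lemma pr_mono {E F : Set Ω} (h : E ⊆ F) : pr μ E ≤ pr μ F :=
  μ.toOuterMeasure.mono h

lemma pr_ne_top (E : Set Ω) : pr μ E ≠ ⊤ :=
  ne_top_of_le_ne_top ENNReal.one_ne_top <|
    (pr_mono μ (Set.subset_univ E)).trans_eq
      ((μ.toOuterMeasure_apply_eq_one_iff _).mpr (Set.subset_univ _))

lemma pr_eq_tsum_inter_fiber (Z : Ω → β) (E : Set Ω) :
    pr μ E = ∑' z, pr μ (E ∩ {ω | Z ω = z}) := by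
  classical
  simp only [pr, PMF.toOuterMeasure_apply]
  rw [ENNReal.tsum_comm]
  refine tsum_congr fun ω => ?_
  by_cases hE : ω ∈ E <;> simp [Set.indicator_apply, hE]

open Classical in
lemma pr_comp_eq_tsum (Z : Ω → β) (g : β → γ) (x : γ) (P Q : Ω → Prop) :
    pr μ {ω | P ω ∧ g (Z ω) = x ∧ Q ω}
      = ∑' z, if g z = x then pr μ {ω | P ω ∧ Z ω = z ∧ Q ω} else 0 := by
  rw [pr_eq_tsum_inter_fiber μ Z]
  refine tsum_congr fun z => ?_
  split_ifs with hz
  · congr 1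
    ext ω
    simp only [Set.mem_inter_iff, Set.mem_ofPred_eq]
    constructor
    · rintro ⟨⟨hP, -, hQ⟩, rfl⟩
      exact ⟨hP, rfl, hQ⟩
    · rintro ⟨hP, rfl, hQ⟩
      exact ⟨⟨hP, hz, hQ⟩, rfl⟩
  · refine pr_eq_zero μ fun ω _ hω => hz ?_
    obtain ⟨⟨-, hx, -⟩, hzω⟩ := hω
    exact hzω ▸ hx

variable {μ}

lemma FunDep.trans {X : Ω → α} {Y : Ω → β} {Z : Ω → γ}
    (hXY : FunDep μ X Y) (hYZ : FunDep μ Y Z) : FunDep μ X Z := by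
  obtain ⟨f, hf⟩ := hXY
  obtain ⟨g, hg⟩ := hYZ
  exact ⟨g ∘ f, fun ω hω => by rw [hg ω hω, hf ω hω, Function.comp_apply]⟩

lemma CondIndep.comp {U : Ω → α} {Z : Ω → β} {T : Ω → δ} (g : β → γ)
    (h : CondIndep μ U Z T) : CondIndep μ U (fun ω => g (Z ω)) T := by
  classical
  intro u x t
  have hsplit := pr_comp_eq_tsum μ Z g x (fun _ => True) (fun ω => T ω = t)
  simp only [true_and] at hsplit
  rw [pr_comp_eq_tsum, hsplit, ← ENNReal.tsum_mul_right, ← ENNReal.tsum_mul_left]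
  refine tsum_congr fun z => ?_
  split_ifs
  · exact h u z t
  · simp

lemma CondIndep.prod_of_funDep {U : Ω → α} {X : Ω → β} {Y : Ω → γ} {T : Ω → δ}
    (hY : CondIndep μ U Y X) (hXT : FunDep μ X T) (hX : CondIndep μ U X T) :
    CondIndep μ U (fun ω => (X ω, Y ω)) T := by
  obtain ⟨f, hf⟩ := hXT
  rintro u ⟨x, y⟩ t
  by_cases hfx : f x = t
  swap
  · have hne : ∀ ω ∈ μ.support, X ω = x → T ω ≠ t := fun ω hω hx => by rwa [hf ω hω, hx]
    have h₁ : pr μ {ω | U ω = u ∧ (X ω, Y ω) = (x, y) ∧ T ω = t} = 0 :=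
      pr_eq_zero μ fun ω hω ⟨_, hxy, ht⟩ => hne ω hω (Prod.ext_iff.mp hxy).1 ht
    have h₂ : pr μ {ω | (X ω, Y ω) = (x, y) ∧ T ω = t} = 0 :=
      pr_eq_zero μ fun ω hω ⟨hxy, ht⟩ => hne ω hω (Prod.ext_iff.mp hxy).1 ht
    rw [h₁, h₂, zero_mul, mul_zero]
  -- On the support `X = x` forces `T = t`, so that conjunct can be dropped everywhere and
  -- the claim is the two hypotheses with the common factor `p(x)` cancelled.
  have hxt : ∀ ω ∈ μ.support, X ω = x → T ω = t := fun ω hω hx => by rw [hf ω hω, hx, hfx]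
  have e₁ : pr μ {ω | U ω = u ∧ (X ω, Y ω) = (x, y) ∧ T ω = t}
      = pr μ {ω | U ω = u ∧ Y ω = y ∧ X ω = x} := pr_congr μ fun ω hω => by
    have := hxt ω hω; simp only [Set.mem_ofPred_eq, Prod.mk.injEq]; tauto
  have e₂ : pr μ {ω | (X ω, Y ω) = (x, y) ∧ T ω = t} = pr μ {ω | Y ω = y ∧ X ω = x} :=
    pr_congr μ fun ω hω => by
      have := hxt ω hω; simp only [Set.mem_ofPred_eq, Prod.mk.injEq]; tauto
  have e₃ : pr μ {ω | U ω = u ∧ X ω = x ∧ T ω = t} = pr μ {ω | U ω = u ∧ X ω = x} :=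
    pr_congr μ fun ω hω => by have := hxt ω hω; simp only [Set.mem_ofPred_eq]; tauto
  have e₄ : pr μ {ω | X ω = x ∧ T ω = t} = pr μ {ω | X ω = x} :=
    pr_congr μ fun ω hω => by have := hxt ω hω; simp only [Set.mem_ofPred_eq]; tauto
  have hUX := hX u x t
  rw [e₃, e₄] at hUX
  rw [e₁, e₂]
  exact ENNReal.mul_eq_mul_of_common_factor (pr_mono μ fun ω h => h.2.2)
    (pr_mono μ fun ω h => h.2) (pr_ne_top μ _) (hY u y x) hUX

end Probability

theorem minSuffStat_add_locally_processed_general {Ω α β γ δ ε : Type}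
    (μ : PMF Ω) (U : Ω → α) (X : Ω → β) (Y : Ω → γ)
    (hci : CondIndep μ U Y X)
    (T1 : Ω → δ) (T2 : Ω → ε)
    (hT1 : MinSuffStat μ X U T1)
    (hT2 : MinSuffStat μ (fun ω => (X ω, Y ω)) U T2) :
    InfoEq μ T1 T2 := by
  obtain ⟨⟨hXT1, hUT1⟩, hmin1⟩ := hT1
  obtain ⟨⟨-, hUT2⟩, hmin2⟩ := hT2
  have hXYX : FunDep μ (fun ω => (X ω, Y ω)) X := ⟨Prod.fst, fun _ _ => rfl⟩
  have h12 : FunDep μ T1 T2 := hmin2 δ T1 ⟨hXYX.trans hXT1, hci.prod_of_funDep hXT1 hUT1⟩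
  exact ⟨h12, hmin1 ε T2 ⟨hXT1.trans h12, hUT2.comp Prod.fst⟩⟩

/-- Lemma 2 of the paper: if `U ⊥⊥ Y | X`, then `S(X;U) =ι S((X,Y);U)`. -/
theorem minSuffStat_add_locally_processed {Ω α β γ δ ε : Type}
    (μ : PMF Ω) (U : Ω → α) (X : Ω → β) (Y : Ω → γ)
    (hU : FinSupp μ U) (hX : FinSupp μ X) (hY : FinSupp μ Y)
    (hci : CondIndep μ U Y X)
    (T1 : Ω → δ) (T2 : Ω → ε)
    (hT1 : MinSuffStat μ X U T1)
    (hT2 : MinSuffStat μ (fun ω => (X ω, Y ω)) U T2) :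
    InfoEq μ T1 T2 :=
  minSuffStat_add_locally_processed_general μ U X Y hci T1 T2 hT1 hT2

end Paper
end

section
/- Let X, Y, Z be discrete random variables with finite support on a common probability space, with probability mass functions p_X, p_Y, p_Z. If X ⊥⊥ Z and X ≤ι (Y, Z) (i.e., X is a function of the pair (Y,Z)), then p_X majorizes p_Y. -/
namespace Paper

/-! If `X = f (Y, Z)`, then for each value `z` the set `s` of values of `Y` is mapped onto a set
`T z := f (s, z)` of at most `|s|` values of `X`, and `{Y ∈ s} ⊆ ⋃ z, {X ∈ T z, Z = z}`.
Independence turns the bound `P(Y ∈ s) ≤ ∑_z P(X ∈ T z, Z = z)` into the average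
`∑_z P(X ∈ T z) P(Z = z)`, which is at most `P(X ∈ T z₀)` for a maximising `z₀`. -/

open Finset

section
variable {Ω : Type} (μ : PMF Ω)

lemma pr_le_one (E : Set Ω) : pr μ E ≤ 1 :=
  (μ.toOuterMeasure.mono (Set.subset_univ E)).trans_eq
    (μ.toOuterMeasure_apply_eq_one_iff _ |>.2 (Set.subset_univ _))

lemma sum_pr_fiber_inter {β : Type} (g : Ω → β) (E : Set Ω) (s : Finset β) :
    ∑ y ∈ s, pr μ ({ω | g ω = y} ∩ E) = pr μ ({ω | g ω ∈ s} ∩ E) := by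
  classical
  simp only [pr, PMF.toOuterMeasure_apply]
  rw [← Summable.tsum_finsetSum fun _ _ => ENNReal.summable]
  refine tsum_congr fun ω => ?_
  by_cases hE : ω ∈ E <;> simp [Set.indicator_apply, hE]

lemma sum_pr_fiber {β : Type} (g : Ω → β) (s : Finset β) :
    ∑ y ∈ s, pr μ {ω | g ω = y} = pr μ {ω | g ω ∈ s} := by
  simpa only [Set.inter_univ] using sum_pr_fiber_inter μ g Set.univ s

lemma sum_mul_pr_fiber_le {γ : Type} (Z : Ω → γ) (S : Finset γ) {g : γ → ENNReal} {c : ENNReal}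
    (hg : ∀ z ∈ S, g z ≤ c) : ∑ z ∈ S, g z * pr μ {ω | Z ω = z} ≤ c :=
  calc ∑ z ∈ S, g z * pr μ {ω | Z ω = z}
      ≤ ∑ z ∈ S, c * pr μ {ω | Z ω = z} := sum_le_sum fun z hz => by gcongr; exact hg z hz
    _ = c * pr μ {ω | Z ω ∈ S} := by rw [← mul_sum, sum_pr_fiber]
    _ ≤ c := mul_le_of_le_one_right' (pr_le_one μ _)

lemma Indep.pr_mem_and_eq {α γ : Type} {X : Ω → α} {Z : Ω → γ} (h : Indep μ X Z)
    (t : Finset α) (z : γ) :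
    pr μ {ω | X ω ∈ t ∧ Z ω = z} = pr μ {ω | X ω ∈ t} * pr μ {ω | Z ω = z} :=
  calc pr μ {ω | X ω ∈ t ∧ Z ω = z}
      = ∑ x ∈ t, pr μ {ω | X ω = x ∧ Z ω = z} := (sum_pr_fiber_inter μ X _ t).symm
    _ = ∑ x ∈ t, pr μ {ω | X ω = x} * pr μ {ω | Z ω = z} := sum_congr rfl fun x _ => h x z
    _ = pr μ {ω | X ω ∈ t} * pr μ {ω | Z ω = z} := by rw [← sum_mul, sum_pr_fiber]

lemma pr_mem_le_sum_pr_image_and_eq {α β γ : Type} [DecidableEq α] {X : Ω → α} {Y : Ω → β}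
    {Z : Ω → γ} {f : β × γ → α} (hf : ∀ ω ∈ μ.support, X ω = f (Y ω, Z ω))
    {S : Finset γ} (hS : ∀ ω ∈ μ.support, Z ω ∈ S) (s : Finset β) :
    pr μ {ω | Y ω ∈ s} ≤ ∑ z ∈ S, pr μ {ω | X ω ∈ s.image (fun y => f (y, z)) ∧ Z ω = z} :=
  calc pr μ {ω | Y ω ∈ s}
      ≤ pr μ (⋃ z ∈ S, {ω | X ω ∈ s.image (fun y => f (y, z)) ∧ Z ω = z}) := by
        refine μ.toOuterMeasure_mono fun ω ⟨hy, hω⟩ => Set.mem_biUnion (hS ω hω) ?_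
        exact ⟨mem_image.2 ⟨Y ω, hy, (hf ω hω).symm⟩, rfl⟩
    _ ≤ _ := MeasureTheory.measure_biUnion_finset_le S _

end

theorem indep_funDep_majorizes_general {Ω : Type} (μ : PMF Ω) (X Y Z : Ω → ℕ)
    (hZ : FinSupp μ Z)
    (hXZ : Indep μ X Z)
    (hfd : FunDep μ (fun ω => (Y ω, Z ω)) X) :
    Majorizes (distOf μ X) (distOf μ Y) := by
  obtain ⟨f, hf⟩ := hfd
  have hZS : ∀ ω ∈ μ.support, Z ω ∈ hZ.toFinset := fun ω hω => hZ.mem_toFinset.2 ⟨ω, hω, rfl⟩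
  intro s
  let T : ℕ → Finset ℕ := fun z => s.image fun y => f (y, z)
  obtain ⟨z₀, -, hz₀⟩ := hZ.toFinset.exists_max_image (fun z => pr μ {ω | X ω ∈ T z})
    ⟨_, hZS _ μ.support_nonempty.some_mem⟩
  refine ⟨T z₀, card_image_le, ?_⟩
  calc ∑ y ∈ s, distOf μ Y y
      = pr μ {ω | Y ω ∈ s} := sum_pr_fiber μ Y s
    _ ≤ ∑ z ∈ hZ.toFinset, pr μ {ω | X ω ∈ T z ∧ Z ω = z} :=
        pr_mem_le_sum_pr_image_and_eq μ hf hZS s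
    _ = ∑ z ∈ hZ.toFinset, pr μ {ω | X ω ∈ T z} * pr μ {ω | Z ω = z} :=
        sum_congr rfl fun z _ => hXZ.pr_mem_and_eq μ (T z) z
    _ ≤ pr μ {ω | X ω ∈ T z₀} := sum_mul_pr_fiber_le μ Z _ hz₀
    _ = ∑ x ∈ T z₀, distOf μ X x := (sum_pr_fiber μ X _).symm

/-- First part of Lemma 4 of the paper: if `X ⊥⊥ Z` and `X ≤ι (Y, Z)`,
then `p_X ⪰ p_Y`. -/
theorem indep_funDep_majorizes {Ω : Type} (μ : PMF Ω) (X Y Z : Ω → ℕ)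
    (hX : FinSupp μ X) (hY : FinSupp μ Y) (hZ : FinSupp μ Z)
    (hXZ : Indep μ X Z)
    (hfd : FunDep μ (fun ω => (Y ω, Z ω)) X) :
    Majorizes (distOf μ X) (distOf μ Y) :=
  indep_funDep_majorizes_general μ X Y Z hZ hXZ hfd

end Paper
end

section
/- Let V ∼ Unif({1,…,ℓ^n}) for some ℓ, n ≥ 1, and let X_1,…,X_k (with k ≤ n) be discrete random variables on the same probability space with cardinalities |𝒳_i| ≤ ℓ for i = 1,…,k, such that (X_1,…,X_k) ≤ι V. Then the following three statements are equivalent: (1) X_1,…,X_k are mutually independent, each uniformly distributed with cardinality ℓ; (2) there exist random variables Y_1,…,Y_{n−k} with cardinalities |𝒴_i| ≤ ℓ for i = 1,…,n−k such that ((X_1,…,X_k),(Y_1,…,Y_{n−k})) =ι V; (3) there exist random variables Y_1,…,Y_{n−k}, each uniformly distributed with cardinality ℓ, such that ((X_1,…,X_k),(Y_1,…,Y_{n−k})) =ι V. -/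
namespace Paper

/-! Write `J = (X, Y)`. If `J =ι V`, then `J` is a bijective image of `V` on the support, so it is
uniform on `ℓ^n` points of the box `∏ 𝒳_i × ∏ 𝒴_j`, which has at most `ℓ^n` points: `J` is uniform
on the whole box and every alphabet has exactly `ℓ` letters. The coordinates of a vector uniform on
a box are mutually independent and uniform.

Conversely, if the `X_i` are mutually independent and uniform on `ℓ` letters, then `X` is uniform
on a box of `ℓ^k` points, and since `X` is a function of the uniform `V`, every fibre of `V ↦ X`
has exactly `ℓ^(n-k)` points. Numbering each fibre bijectively by the words of length `n - k` over
`{0, …, ℓ-1}` gives `Y`: then `V ↦ (X, Y)` is injective, and `Y` is uniform on all words, so its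
letters are uniform. -/

open PMF Finset

section Probability

variable {Ω α β : Type} (μ : PMF Ω)

theorem pr_eq_map_apply (W : Ω → α) (a : α) : pr μ {ω | W ω = a} = μ.map W a := by
  rw [← toOuterMeasure_apply_singleton, toOuterMeasure_map_apply]
  rfl

theorem pr_empty : pr μ ∅ = 0 :=
  MeasureTheory.measure_empty

theorem pr_univ : pr μ Set.univ = 1 :=
  (toOuterMeasure_apply_eq_one_iff μ _).2 (Set.subset_univ _)

theorem map_eq_map_map_of_eq_comp {W : Ω → α} {Z : Ω → β} {g : α → β}
    (h : ∀ ω ∈ μ.support, Z ω = g (W ω)) : μ.map Z = (μ.map W).map g := by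
  rw [map_comp]
  ext b
  simp only [map_apply]
  refine tsum_congr fun ω => ?_
  by_cases hω : ω ∈ μ.support
  · rw [h ω hω, Function.comp_apply]
  · simp [(mem_support_iff μ ω).not_left.1 hω]

theorem pr_eq_tsum_inter (E : Set Ω) (W : Ω → α) :
    pr μ E = ∑' a, pr μ (E ∩ {ω | W ω = a}) := by
  simp only [pr, toOuterMeasure_apply]
  rw [ENNReal.tsum_comm]
  refine tsum_congr fun ω => ?_
  rw [tsum_eq_single (W ω) fun a ha => ?_]
  · by_cases hE : ω ∈ E <;> simp [Set.indicator, hE]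
  · simp [Set.indicator, Ne.symm ha]

theorem pr_and_mem_eq_tsum (P : Ω → Prop) (B : Ω → β) (R : Set β) :
    pr μ {ω | P ω ∧ B ω ∈ R} = ∑' b, R.indicator (fun b => pr μ {ω | P ω ∧ B ω = b}) b := by
  rw [pr_eq_tsum_inter μ _ B]
  refine tsum_congr fun b => ?_
  by_cases hb : b ∈ R
  · rw [Set.indicator_of_mem hb]
    congr 1
    ext ω
    simp only [Set.mem_inter_iff, Set.mem_ofPred_eq]
    grind
  · have hempty : {ω | P ω ∧ B ω ∈ R} ∩ {ω | B ω = b} = ∅ :=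
      Set.eq_empty_of_forall_notMem fun ω ⟨⟨_, hR⟩, hB⟩ => hb (hB ▸ hR)
    rw [Set.indicator_of_notMem hb, hempty, pr_empty]

variable {μ}

theorem Indep.pr_and_mem {A : Ω → α} {B : Ω → β} (h : Indep μ A B) (a : α) (R : Set β) :
    pr μ {ω | A ω = a ∧ B ω ∈ R} = pr μ {ω | A ω = a} * pr μ {ω | B ω ∈ R} := by
  have hB := pr_and_mem_eq_tsum μ (fun _ => True) B R
  simp only [true_and] at hB
  rw [pr_and_mem_eq_tsum μ _ B R, hB, ← ENNReal.tsum_mul_left]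
  simp only [h a, Set.indicator_mul_right]

theorem MutIndep.pr_forall_mem_eq_prod {ι : Type} [DecidableEq ι] {β : ι → Type}
    {Z : ∀ i, Ω → β i} (h : MutIndep μ Z) (x : ∀ i, β i) (A : Finset ι) :
    pr μ {ω | ∀ i ∈ A, Z i ω = x i} = ∏ i ∈ A, pr μ {ω | Z i ω = x i} := by
  induction A using Finset.induction_on with
  | empty => simpa using pr_univ μ
  | insert i A hi ih =>
    let R : Set (∀ j : {j // j ≠ i}, β j) := {r | ∀ j, j.1 ∈ A → r j = x j}
    have hrest : {ω | (fun j : {j // j ≠ i} => Z j.1 ω) ∈ R} = {ω | ∀ j ∈ A, Z j ω = x j} := by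
      ext ω
      exact ⟨fun hω j hj => hω ⟨j, ne_of_mem_of_not_mem hj hi⟩ hj, fun hω j hj => hω j hj⟩
    have hinsert : {ω | ∀ j ∈ insert i A, Z j ω = x j}
        = {ω | Z i ω = x i ∧ (fun j : {j // j ≠ i} => Z j.1 ω) ∈ R} := by
      ext ω
      simp only [Finset.forall_mem_insert, Set.mem_ofPred_eq]
      exact and_congr_right' (Set.ext_iff.1 hrest ω).symm
    rw [hinsert, (h i).pr_and_mem, hrest, ih, Finset.prod_insert hi]

theorem MutIndep.map_pi_apply {ι : Type} [Fintype ι] [DecidableEq ι] {β : ι → Type}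
    {Z : ∀ i, Ω → β i} (h : MutIndep μ Z) (x : ∀ i, β i) :
    μ.map (fun ω i => Z i ω) x = ∏ i, μ.map (Z i) (x i) := by
  simp_rw [← pr_eq_map_apply, ← h.pr_forall_mem_eq_prod x Finset.univ, Finset.mem_univ,
    forall_const, funext_iff]

end Probability

theorem natCast_div_eq_inv_iff {a b c : ℕ} (hb : b ≠ 0) (hc : c ≠ 0) :
    (a : ENNReal) / b = (c : ENNReal)⁻¹ ↔ a * c = b := by
  rw [← one_div, ENNReal.div_eq_div_iff (by exact_mod_cast hc) (ENNReal.natCast_ne_top c)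
    (by exact_mod_cast hb) (ENNReal.natCast_ne_top b), mul_one, mul_comm]
  norm_cast

section UniformOfFinset

variable {α β : Type} {S : Finset α} (hS : S.Nonempty)

theorem map_uniformOfFinset_apply [DecidableEq β] (f : α → β) (b : β) :
    (uniformOfFinset S hS).map f b = #{a ∈ S | f a = b} / #S := by
  classical
  rw [← toOuterMeasure_apply_singleton, toOuterMeasure_map_apply,
    toOuterMeasure_uniformOfFinset_apply]
  congr

theorem map_uniformOfFinset_eq_iff [DecidableEq β] {T : Finset β} (hT : T.Nonempty) (f : α → β) :
    (uniformOfFinset S hS).map f = uniformOfFinset T hT ↔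
      (∀ a ∈ S, f a ∈ T) ∧ ∀ b ∈ T, #{a ∈ S | f a = b} * #T = #S := by
  have hS0 : #S ≠ 0 := hS.card_pos.ne'
  have hT0 : #T ≠ 0 := hT.card_pos.ne'
  constructor
  · intro h
    refine ⟨fun a ha => ?_, fun b hb => ?_⟩
    · have := congrArg PMF.support h
      rw [support_map, support_uniformOfFinset, support_uniformOfFinset] at this
      exact mem_coe.1 (this ▸ Set.mem_image_of_mem f ha)
    · have := DFunLike.congr_fun h b
      rwa [map_uniformOfFinset_apply, uniformOfFinset_apply_of_mem _ hb,
        natCast_div_eq_inv_iff hS0 hT0] at this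
  · rintro ⟨hmaps, hfiber⟩
    ext b
    rw [map_uniformOfFinset_apply, uniformOfFinset_apply]
    split_ifs with hb
    · exact (natCast_div_eq_inv_iff hS0 hT0).2 (hfiber b hb)
    · rw [filter_false_of_mem fun a ha (he : f a = b) => hb (he ▸ hmaps a ha)]
      simp

theorem map_uniformOfFinset_of_injOn [DecidableEq β] {f : α → β} (hf : Set.InjOn f S) :
    (uniformOfFinset S hS).map f = uniformOfFinset (S.image f) (hS.image f) := by
  refine (map_uniformOfFinset_eq_iff hS _ f).2 ⟨fun a ha => mem_image_of_mem f ha, fun b hb => ?_⟩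
  obtain ⟨a, ha, rfl⟩ := mem_image.1 hb
  have hfiber : {a' ∈ S | f a' = f a} = {a} := by
    ext a'
    simp only [mem_filter, mem_singleton]
    exact ⟨fun ⟨ha', he⟩ => hf ha' ha he, by rintro rfl; exact ⟨ha, rfl⟩⟩
  rw [hfiber, card_singleton, one_mul, card_image_of_injOn hf]

theorem map_fst_uniformOfFinset_product {s : Finset α} {t : Finset β} (h : (s ×ˢ t).Nonempty) :
    (uniformOfFinset _ h).map Prod.fst = uniformOfFinset s h.fst := by
  classical
  refine (map_uniformOfFinset_eq_iff h _ _).2 ⟨fun p hp => (mem_product.1 hp).1, fun a ha => ?_⟩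
  rw [filter_product_left (· = a), card_product, card_product, filter_eq' s a, if_pos ha,
    card_singleton, one_mul, mul_comm]

theorem map_snd_uniformOfFinset_product {s : Finset α} {t : Finset β} (h : (s ×ˢ t).Nonempty) :
    (uniformOfFinset _ h).map Prod.snd = uniformOfFinset t h.snd := by
  classical
  refine (map_uniformOfFinset_eq_iff h _ _).2 ⟨fun p hp => (mem_product.1 hp).2, fun b hb => ?_⟩
  rw [filter_product_right (· = b), card_product, card_product, filter_eq' t b, if_pos hb,
    card_singleton, mul_one]

theorem uniformOfFinset_product_apply {s : Finset α} {t : Finset β} (h : (s ×ˢ t).Nonempty)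
    (p : α × β) :
    uniformOfFinset _ h p = uniformOfFinset s h.fst p.1 * uniformOfFinset t h.snd p.2 := by
  classical
  simp only [uniformOfFinset_apply, Finset.mem_product, Finset.card_product, ite_and,
    Nat.cast_mul]
  split_ifs <;> simp [ENNReal.mul_inv]

theorem uniformOfFinset_piFinset_apply {ι : Type} [Fintype ι] [DecidableEq ι] {β : ι → Type}
    {s : ∀ i, Finset (β i)} (h : (Fintype.piFinset s).Nonempty) (x : ∀ i, β i) :
    uniformOfFinset _ h x = ∏ i, uniformOfFinset (s i) (Fintype.piFinset_nonempty.1 h i) (x i) := by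
  classical
  simp only [uniformOfFinset_apply, Finset.prod_ite_zero, Fintype.mem_piFinset, mem_univ,
    forall_const, Fintype.card_piFinset]
  congr 1
  push_cast
  exact ENNReal.prod_inv_distrib fun i _ _ _ _ => Or.inr (ENNReal.natCast_ne_top _)

theorem image_piSplitAt_piFinset {ι : Type} [Fintype ι] [DecidableEq ι] {β : ι → Type}
    [∀ i, DecidableEq (β i)] (s : ∀ i, Finset (β i)) (i : ι) :
    (Fintype.piFinset s).image (Equiv.piSplitAt i β)
      = s i ×ˢ Fintype.piFinset fun j : {j // j ≠ i} => s j := by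
  ext p
  simp only [mem_image, mem_product, Fintype.mem_piFinset]
  constructor
  · rintro ⟨a, ha, rfl⟩
    exact ⟨ha i, fun j => ha j⟩
  · rintro ⟨hi, hrest⟩
    refine ⟨(Equiv.piSplitAt i β).symm p, fun j => ?_, Equiv.apply_symm_apply _ _⟩
    rw [Equiv.piSplitAt_symm_apply]
    split_ifs with hj
    · subst hj
      exact hi
    · exact hrest ⟨j, hj⟩

end UniformOfFinset

theorem exists_equiv_prod_of_card_fiber {α β γ : Type*} [Fintype α] [Fintype γ]
    [DecidableEq β] (f : α → β) (h : ∀ b, Fintype.card {a // f a = b} = Fintype.card γ) :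
    ∃ σ : α ≃ β × γ, ∀ a, (σ a).1 = f a :=
  ⟨(Equiv.sigmaFiberEquiv f).symm.trans <|
      (Equiv.sigmaCongrRight fun b => Fintype.equivOfCardEq (h b)).trans (Equiv.sigmaEquivProd _ _),
    fun _ => rfl⟩

theorem exists_injOn_image_eq_product {α β γ : Type} [DecidableEq β] [DecidableEq γ] [Nonempty γ]
    {S : Finset α} {T : Finset β} {B : Finset γ} (f : α → β) (hf : ∀ a ∈ S, f a ∈ T)
    (hfiber : ∀ b ∈ T, #{a ∈ S | f a = b} = #B) :
    ∃ c : α → γ, Set.InjOn (fun a => (f a, c a)) S ∧ S.image (fun a => (f a, c a)) = T ×ˢ B := by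
  classical
  let g : S → T := fun a => ⟨f a, hf a a.2⟩
  obtain ⟨σ, hσ⟩ := exists_equiv_prod_of_card_fiber (γ := B) g fun b => by
    rw [Fintype.card_coe, ← hfiber b b.2, Fintype.card_subtype, univ_eq_attach]
    simp only [g, Subtype.ext_iff]
    rw [filter_attach (f · = b.1), card_map, card_attach]
  let c : α → γ := fun a => if ha : a ∈ S then (σ ⟨a, ha⟩).2 else Classical.arbitrary γ
  have hc : ∀ a (ha : a ∈ S), c a = (σ ⟨a, ha⟩).2 := fun a ha => dif_pos ha
  have hinj : Set.InjOn (fun a => (f a, c a)) S := by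
    intro a ha a' ha' he
    simp only [Prod.mk.injEq, hc a ha, hc a' ha'] at he
    have : σ ⟨a, ha⟩ = σ ⟨a', ha'⟩ :=
      Prod.ext (Subtype.ext (by rw [hσ, hσ]; exact he.1)) (Subtype.ext he.2)
    exact congrArg Subtype.val (σ.injective this)
  refine ⟨c, hinj, eq_of_subset_of_card_le (fun p hp => ?_) ?_⟩
  · obtain ⟨a, ha, rfl⟩ := mem_image.1 hp
    exact mem_product.2 ⟨hf a ha, hc a ha ▸ (σ ⟨a, ha⟩).2.2⟩
  · rw [card_image_of_injOn hinj, card_product, ← Fintype.card_coe S, Fintype.card_congr σ,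
      Fintype.card_prod, Fintype.card_coe, Fintype.card_coe]

theorem eq_of_le_of_prod_eq_pow {ι : Type*} [Fintype ι] {a : ι → ℕ} {ℓ : ℕ} (hle : ∀ i, a i ≤ ℓ)
    (hprod : ∏ i, a i = ℓ ^ Fintype.card ι) (i : ι) : a i = ℓ := by
  by_contra hne
  have hlt : a i < ℓ := (hle i).lt_of_ne hne
  have hpos : ∀ j ∈ Finset.univ, 0 < a j := fun j _ => Nat.pos_of_ne_zero fun h0 =>
    (pow_pos (Nat.zero_lt_of_lt hlt) _).ne' (hprod ▸ Finset.prod_eq_zero (Finset.mem_univ j) h0)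
  have := Finset.prod_lt_prod hpos (fun j _ => hle j) ⟨i, Finset.mem_univ i, hlt⟩
  rw [hprod, Finset.prod_const, Finset.card_univ] at this
  exact this.false

section RandomVariables

variable {Ω α β : Type} {μ : PMF Ω}

theorem coe_eq_image_support_of_map_eq_uniformOfFinset {W : Ω → α} {S : Finset α}
    {hS : S.Nonempty} (h : μ.map W = uniformOfFinset S hS) : (S : Set α) = W '' μ.support := by
  rw [← support_map, h, support_uniformOfFinset]

theorem mem_of_map_eq_uniformOfFinset {W : Ω → α} {S : Finset α} {hS : S.Nonempty}
    (h : μ.map W = uniformOfFinset S hS) {ω : Ω} (hω : ω ∈ μ.support) : W ω ∈ S :=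
  mem_coe.1 ((coe_eq_image_support_of_map_eq_uniformOfFinset h).ge ⟨ω, hω, rfl⟩)

theorem uniformCard_iff {W : Ω → α} {N : ℕ} :
    UniformCard μ W N ↔
      ∃ (S : Finset α) (hS : S.Nonempty), #S = N ∧ μ.map W = uniformOfFinset S hS := by
  classical
  constructor
  · rintro ⟨S, rfl, hS, hS0⟩
    have hne : S.Nonempty := by
      obtain ⟨a, ha⟩ := (μ.map W).support_nonempty
      exact ⟨a, by_contra fun haS => ha (by rw [← pr_eq_map_apply, hS0 a haS])⟩
    refine ⟨S, hne, rfl, PMF.ext fun a => ?_⟩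
    rw [← pr_eq_map_apply, uniformOfFinset_apply]
    split_ifs with ha
    exacts [hS a ha, hS0 a ha]
  · rintro ⟨S, hS, rfl, h⟩
    refine ⟨S, rfl, fun a ha => ?_, fun a ha => ?_⟩ <;>
      rw [pr_eq_map_apply, h]
    exacts [uniformOfFinset_apply_of_mem hS ha, uniformOfFinset_apply_of_notMem hS ha]

theorem UniformCard.cardLE {W : Ω → α} {N : ℕ} (h : UniformCard μ W N) : CardLE μ W N := by
  obtain ⟨S, hS, rfl, hW⟩ := uniformCard_iff.1 h
  exact ⟨S, le_rfl, fun ω hω => mem_of_map_eq_uniformOfFinset hW hω⟩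

theorem indep_of_map_eq_uniformOfFinset_product {A : Ω → α} {B : Ω → β} {s : Finset α}
    {t : Finset β} {h : (s ×ˢ t).Nonempty}
    (hAB : μ.map (fun ω => (A ω, B ω)) = uniformOfFinset _ h) : Indep μ A B := by
  intro a b
  have hA : μ.map A = uniformOfFinset s h.fst := by
    rw [← map_fst_uniformOfFinset_product h, ← hAB, map_comp]; rfl
  have hB : μ.map B = uniformOfFinset t h.snd := by
    rw [← map_snd_uniformOfFinset_product h, ← hAB, map_comp]; rfl
  simp_rw [pr_eq_map_apply, ← Prod.mk.injEq, pr_eq_map_apply, hAB, hA, hB]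
  exact uniformOfFinset_product_apply h (a, b)

theorem UniformCard.of_infoEq {V : Ω → α} {W : Ω → β} {N : ℕ} (hV : UniformCard μ V N)
    (hWV : InfoEq μ W V) : UniformCard μ W N := by
  classical
  obtain ⟨S, hS, rfl, hVS⟩ := uniformCard_iff.1 hV
  obtain ⟨⟨g, hg⟩, ⟨h, hh⟩⟩ := hWV
  have hinv : Set.LeftInvOn g h S := by
    rw [coe_eq_image_support_of_map_eq_uniformOfFinset hVS]
    rintro _ ⟨ω, hω, rfl⟩
    rw [← hh ω hω, ← hg ω hω]
  refine uniformCard_iff.2 ⟨S.image h, hS.image h, card_image_of_injOn hinv.injOn, ?_⟩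
  rw [map_eq_map_map_of_eq_comp μ hh, hVS, map_uniformOfFinset_of_injOn hS hinv.injOn]

theorem UniformCard.map_eq_uniformOfFinset_of_mem {W : Ω → α} {N : ℕ} (hW : UniformCard μ W N)
    {P : Finset α} (hP : ∀ ω ∈ μ.support, W ω ∈ P) (hcard : #P ≤ N) :
    #P = N ∧ ∃ hne, μ.map W = uniformOfFinset P hne := by
  obtain ⟨S, hS, rfl, hWS⟩ := uniformCard_iff.1 hW
  have hSP : S ⊆ P := by
    intro a ha
    obtain ⟨ω, hω, rfl⟩ := (coe_eq_image_support_of_map_eq_uniformOfFinset hWS).le ha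
    exact hP ω hω
  obtain rfl := eq_of_subset_of_card_le hSP hcard
  exact ⟨rfl, hS, hWS⟩

theorem funDep_of_injOn {W : Ω → α} {Z : Ω → β}
    {F : α → β} {S : Set α} (hZ : ∀ ω ∈ μ.support, Z ω = F (W ω))
    (hW : ∀ ω ∈ μ.support, W ω ∈ S) (hF : Set.InjOn F S) : FunDep μ Z W :=
  have : Nonempty α := ⟨W μ.support_nonempty.some⟩
  ⟨Function.invFunOn F S, fun ω hω => by rw [hZ ω hω, hF.leftInvOn_invFunOn (hW ω hω)]⟩

section Box

variable {ι : Type} [Fintype ι] [DecidableEq ι] {β : ι → Type} {Z : ∀ i, Ω → β i}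
  {s : ∀ i, Finset (β i)} {h : (Fintype.piFinset s).Nonempty}

theorem map_piSplitAt_eq_uniformOfFinset (hZ : μ.map (fun ω i => Z i ω) = uniformOfFinset _ h)
    (i : ι) : ∃ hne, μ.map (fun ω => (Z i ω, fun j : {j // j ≠ i} => Z j ω))
      = uniformOfFinset (s i ×ˢ Fintype.piFinset fun j : {j // j ≠ i} => s j) hne := by
  classical
  refine ⟨image_piSplitAt_piFinset s i ▸ h.image _, ?_⟩
  rw [show (fun ω => (Z i ω, fun j : {j // j ≠ i} => Z j ω))
      = Equiv.piSplitAt i β ∘ fun ω i => Z i ω from rfl, ← map_comp, hZ,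
    map_uniformOfFinset_of_injOn _ (Equiv.injective _).injOn]
  congr 1
  exact image_piSplitAt_piFinset s i

theorem mutIndep_of_map_pi_eq_uniformOfFinset
    (hZ : μ.map (fun ω i => Z i ω) = uniformOfFinset _ h) : MutIndep μ Z := fun i =>
  have ⟨_, hsplit⟩ := map_piSplitAt_eq_uniformOfFinset hZ i
  indep_of_map_eq_uniformOfFinset_product hsplit

theorem map_eq_uniformOfFinset_of_map_pi
    (hZ : μ.map (fun ω i => Z i ω) = uniformOfFinset _ h) (i : ι) :
    μ.map (Z i) = uniformOfFinset (s i) (Fintype.piFinset_nonempty.1 h i) := by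
  obtain ⟨hne, hsplit⟩ := map_piSplitAt_eq_uniformOfFinset hZ i
  rw [← map_fst_uniformOfFinset_product hne, ← hsplit, map_comp]
  rfl

end Box

theorem MutIndep.map_pi_eq_uniformOfFinset {ι : Type} [Fintype ι] [DecidableEq ι] {β : ι → Type}
    {Z : ∀ i, Ω → β i} (h : MutIndep μ Z) {s : ∀ i, Finset (β i)} (hs : ∀ i, (s i).Nonempty)
    (hZ : ∀ i, μ.map (Z i) = uniformOfFinset (s i) (hs i)) :
    μ.map (fun ω i => Z i ω) = uniformOfFinset _ (Fintype.piFinset_nonempty.2 hs) := by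
  ext x
  rw [h.map_pi_apply, uniformOfFinset_piFinset_apply]
  simp only [hZ]

theorem exists_uniform_complement {κ : Type} [Fintype κ] {ℓ : ℕ} {V : Ω → α} {W : Ω → β}
    {S : Finset α} {T : Finset β} {hS : S.Nonempty} {hT : T.Nonempty}
    (hV : μ.map V = uniformOfFinset S hS) (hW : μ.map W = uniformOfFinset T hT)
    (hWV : FunDep μ V W) (hcard : #S = #T * ℓ ^ Fintype.card κ) :
    ∃ Y : κ → Ω → ℕ, (∀ j, UniformCard μ (Y j) ℓ) ∧
      InfoEq μ (fun ω => (W ω, fun j => Y j ω)) V := by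
  classical
  obtain ⟨f, hf⟩ := hWV
  have hfS : (uniformOfFinset S hS).map f = uniformOfFinset T hT := by
    rw [← hV, ← map_eq_map_map_of_eq_comp μ hf, hW]
  obtain ⟨hfT, hfiber⟩ := (map_uniformOfFinset_eq_iff hS hT f).1 hfS
  let B := Fintype.piFinset fun _ : κ => range ℓ
  have hfiber' : ∀ x ∈ T, #{v ∈ S | f v = x} = #B := fun x hx =>
    Nat.eq_of_mul_eq_mul_left hT.card_pos <| by
      rw [mul_comm, hfiber x hx, hcard, Fintype.card_piFinset, prod_const, card_range, card_univ]
  obtain ⟨c, hinj, himage⟩ := exists_injOn_image_eq_product f hfT hfiber'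
  have hne : (T ×ˢ B).Nonempty := himage ▸ hS.image _
  have hF : (uniformOfFinset S hS).map (fun v => (f v, c v)) = uniformOfFinset _ hne := by
    rw [map_uniformOfFinset_of_injOn hS hinj]
    congr 1
  have hY : μ.map (fun ω => c (V ω)) = uniformOfFinset B hne.snd := by
    rw [← map_snd_uniformOfFinset_product hne, ← hF, map_comp, ← hV]
    exact map_eq_map_map_of_eq_comp μ fun _ _ => rfl
  have hWY : ∀ ω ∈ μ.support, (W ω, c (V ω)) = (f (V ω), c (V ω)) := fun ω hω => by rw [hf ω hω]
  refine ⟨fun j ω => c (V ω) j, fun j => uniformCard_iff.2 ⟨range ℓ,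
    Fintype.piFinset_nonempty.1 hne.snd j, card_range ℓ,
    map_eq_uniformOfFinset_of_map_pi hY j⟩, ?_, ⟨fun v => (f v, c v), hWY⟩⟩
  exact funDep_of_injOn hWY (fun ω hω => mem_of_map_eq_uniformOfFinset hV hω) hinj

theorem exists_uniform_complement_of_mutIndep {ι κ : Type} [Fintype ι] [DecidableEq ι] [Fintype κ]
    {ℓ : ℕ} {V : Ω → α} (hV : UniformCard μ V (ℓ ^ (Fintype.card ι + Fintype.card κ)))
    {X : ι → Ω → β} (hVX : FunDep μ V fun ω i => X i ω) (hX : MutIndep μ X)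
    (hU : ∀ i, UniformCard μ (X i) ℓ) :
    ∃ Y : κ → Ω → ℕ, (∀ j, UniformCard μ (Y j) ℓ) ∧
      InfoEq μ (fun ω => (fun i => X i ω, fun j => Y j ω)) V := by
  obtain ⟨S, hS, hScard, hVS⟩ := uniformCard_iff.1 hV
  choose s hs hsℓ hXs using fun i => uniformCard_iff.1 (hU i)
  refine exists_uniform_complement hVS (hX.map_pi_eq_uniformOfFinset hs hXs) hVX ?_
  rw [hScard, Fintype.card_piFinset, pow_add]
  simp [hsℓ]

theorem mutIndep_of_infoEq {ι κ γ : Type} [Fintype ι] [DecidableEq ι] [Fintype κ]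
    [DecidableEq κ] {ℓ : ℕ} {V : Ω → α}
    (hV : UniformCard μ V (ℓ ^ (Fintype.card ι + Fintype.card κ)))
    {X : ι → Ω → β} (hX : ∀ i, CardLE μ (X i) ℓ) {Y : κ → Ω → γ} (hY : ∀ j, CardLE μ (Y j) ℓ)
    (hXY : InfoEq μ (fun ω => (fun i => X i ω, fun j => Y j ω)) V) :
    MutIndep μ X ∧ ∀ i, UniformCard μ (X i) ℓ := by
  choose s hsℓ hXs using hX
  choose t htℓ hYt using hY
  obtain ⟨hcard, hne, hJ⟩ := (hV.of_infoEq hXY).map_eq_uniformOfFinset_of_mem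
    (P := Fintype.piFinset s ×ˢ Fintype.piFinset t)
    (fun ω hω => mem_product.2 ⟨Fintype.mem_piFinset.2 fun i => hXs i ω hω,
      Fintype.mem_piFinset.2 fun j => hYt j ω hω⟩)
    (by
      rw [card_product, Fintype.card_piFinset, Fintype.card_piFinset, pow_add]
      exact Nat.mul_le_mul (prod_le_pow_card _ _ _ fun i _ => hsℓ i)
        (prod_le_pow_card _ _ _ fun j _ => htℓ j))
  have hs : ∀ i, #(s i) = ℓ := fun i =>
    eq_of_le_of_prod_eq_pow (a := Sum.elim (fun i => #(s i)) fun j => #(t j))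
      (Sum.rec hsℓ htℓ) (by
        rw [Fintype.prod_sum_type, Fintype.card_sum]
        simpa [Fintype.card_piFinset] using hcard) (Sum.inl i)
  have hXmap : μ.map (fun ω i => X i ω) = uniformOfFinset _ hne.fst := by
    rw [← map_fst_uniformOfFinset_product hne, ← hJ, map_comp]
    rfl
  exact ⟨mutIndep_of_map_pi_eq_uniformOfFinset hXmap, fun i => uniformCard_iff.2
    ⟨s i, _, hs i, map_eq_uniformOfFinset_of_map_pi hXmap i⟩⟩

end RandomVariables

theorem iid_extend_general {Ω : Type} (μ : PMF Ω) (ℓ n k : ℕ)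
    (hk : k ≤ n)
    (V : Ω → ℕ) (hV : UniformCard μ V (ℓ ^ n))
    (X : Fin k → Ω → ℕ)
    (hcard : ∀ i, CardLE μ (X i) ℓ)
    (hfd : FunDep μ V (fun ω => fun i => X i ω)) :
    ((MutIndep μ X ∧ ∀ i, UniformCard μ (X i) ℓ) ↔
      (∃ Y : Fin (n - k) → Ω → ℕ, (∀ i, CardLE μ (Y i) ℓ) ∧
        InfoEq μ (fun ω => (fun i => X i ω, fun i => Y i ω)) V)) ∧
    ((∃ Y : Fin (n - k) → Ω → ℕ, (∀ i, CardLE μ (Y i) ℓ) ∧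
        InfoEq μ (fun ω => (fun i => X i ω, fun i => Y i ω)) V) ↔
      (∃ Y : Fin (n - k) → Ω → ℕ, (∀ i, UniformCard μ (Y i) ℓ) ∧
        InfoEq μ (fun ω => (fun i => X i ω, fun i => Y i ω)) V)) := by
  replace hV : UniformCard μ V (ℓ ^ (Fintype.card (Fin k) + Fintype.card (Fin (n - k)))) := by
    rwa [Fintype.card_fin, Fintype.card_fin, Nat.add_sub_cancel' hk]
  have h13 (h1 : MutIndep μ X ∧ ∀ i, UniformCard μ (X i) ℓ) :=
    exists_uniform_complement_of_mutIndep hV hfd h1.1 h1.2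
  have h21 : (∃ Y : Fin (n - k) → Ω → ℕ, (∀ i, CardLE μ (Y i) ℓ) ∧
      InfoEq μ (fun ω => (fun i => X i ω, fun i => Y i ω)) V) →
      MutIndep μ X ∧ ∀ i, UniformCard μ (X i) ℓ :=
    fun ⟨_, hY, hXY⟩ => mutIndep_of_infoEq hV hcard hY hXY
  have h32 : (∃ Y : Fin (n - k) → Ω → ℕ, (∀ i, UniformCard μ (Y i) ℓ) ∧
      InfoEq μ (fun ω => (fun i => X i ω, fun i => Y i ω)) V) →
      ∃ Y : Fin (n - k) → Ω → ℕ, (∀ i, CardLE μ (Y i) ℓ) ∧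
        InfoEq μ (fun ω => (fun i => X i ω, fun i => Y i ω)) V :=
    fun ⟨Y, hY, hXY⟩ => ⟨Y, fun i => (hY i).cardLE, hXY⟩
  exact ⟨⟨fun h => h32 (h13 h), h21⟩, ⟨fun h => h13 (h21 h), h32⟩⟩

/-- Lemma 5 of the paper: for `V ∼ Unif({1,…,ℓ^n})` and `X_1,…,X_k` (with `k ≤ n`) of
cardinalities at most `ℓ` that are functions of `V`, the three statements are
equivalent: (1) the `X_i` are mutually independent, each uniform with cardinality `ℓ`;
(2) there are `Y_1,…,Y_{n-k}` of cardinalities at most `ℓ` with `((X_i), (Y_i)) =ι V`;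
(3) there are `Y_1,…,Y_{n-k}`, each uniform with cardinality `ℓ`, with
`((X_i), (Y_i)) =ι V`. -/
theorem iid_extend {Ω : Type} (μ : PMF Ω) (ℓ n k : ℕ)
    (hl : 1 ≤ ℓ) (hn : 1 ≤ n) (hk : k ≤ n)
    (V : Ω → ℕ) (hV : UniformCard μ V (ℓ ^ n))
    (X : Fin k → Ω → ℕ)
    (hcard : ∀ i, CardLE μ (X i) ℓ)
    (hfd : FunDep μ V (fun ω => fun i => X i ω)) :
    ((MutIndep μ X ∧ ∀ i, UniformCard μ (X i) ℓ) ↔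
      (∃ Y : Fin (n - k) → Ω → ℕ, (∀ i, CardLE μ (Y i) ℓ) ∧
        InfoEq μ (fun ω => (fun i => X i ω, fun i => Y i ω)) V)) ∧
    ((∃ Y : Fin (n - k) → Ω → ℕ, (∀ i, CardLE μ (Y i) ℓ) ∧
        InfoEq μ (fun ω => (fun i => X i ω, fun i => Y i ω)) V) ↔
      (∃ Y : Fin (n - k) → Ω → ℕ, (∀ i, UniformCard μ (Y i) ℓ) ∧
        InfoEq μ (fun ω => (fun i => X i ω, fun i => Y i ω)) V)) :=
  iid_extend_general μ ℓ n k hk V hV X hcard hfd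

end Paper
end
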